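/- Let K ⊆ ℝ² be the attractor of the IFS {φ_1, …, φ_9} where φ_1(x) = x/6 + (−15/8, 15/8), φ_2(x) = x/6 + (−5/2, −5/4), φ_3(x) = (1/6)R_{3π/2}x + (−5/4, −5/4), φ_4(x) = (1/6)R_{π/2}x + (−5/2, −5/2), φ_5(x) = (1/6)R_π x + (−5/4, −5/2), φ_6(x) = x/6 + (5/4, −5/4), φ_7(x) = (1/6)R_{3π/2}x + (5/2, −5/4), φ_8(x) = (1/6)R_{π/2}x + (5/4, −5/2), φ_9(x) = (1/6)R_π x + (5/2, −5/2), and let f(x) = x/6 + (15/8, −15/8). Let x_1 ∈ K be the fixed point of φ_1. Then f(x_1) is not an interior point of f(K) in the subspace topology of K; in particular, f(K) is not relatively open in K. -/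
import Mathlib

open Real

/-- Rotation of `ℝ²` by angle `θ` counterclockwise about the origin. -/
noncomputable def rot2 (θ : ℝ) (p : ℝ × ℝ) : ℝ × ℝ :=
  (Real.cos θ * p.1 - Real.sin θ * p.2, Real.sin θ * p.1 + Real.cos θ * p.2)

/-- The nine similitudes `φ_1, …, φ_9` of Example 2.6 (indexed by `0, …, 8`). -/
noncomputable def exPhi : Fin 9 → ℝ × ℝ → ℝ × ℝ :=
  ![fun p => (1/6 : ℝ) • p + (-(15/8 : ℝ), (15/8 : ℝ)),
    fun p => (1/6 : ℝ) • p + (-(5/2 : ℝ), -(5/4 : ℝ)),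
    fun p => (1/6 : ℝ) • rot2 (3*π/2) p + (-(5/4 : ℝ), -(5/4 : ℝ)),
    fun p => (1/6 : ℝ) • rot2 (π/2) p + (-(5/2 : ℝ), -(5/2 : ℝ)),
    fun p => (1/6 : ℝ) • rot2 π p + (-(5/4 : ℝ), -(5/2 : ℝ)),
    fun p => (1/6 : ℝ) • p + ((5/4 : ℝ), -(5/4 : ℝ)),
    fun p => (1/6 : ℝ) • rot2 (3*π/2) p + ((5/2 : ℝ), -(5/4 : ℝ)),
    fun p => (1/6 : ℝ) • rot2 (π/2) p + ((5/4 : ℝ), -(5/2 : ℝ)),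
    fun p => (1/6 : ℝ) • rot2 π p + ((5/2 : ℝ), -(5/2 : ℝ))]

/-- The similitude `f(x) = x/6 + (15/8, −15/8)` of Example 2.6. -/
noncomputable def exF : ℝ × ℝ → ℝ × ℝ :=
  fun p => (1/6 : ℝ) • p + ((15/8 : ℝ), -(15/8 : ℝ))

lemma rot2_pi_div_two' (p : ℝ × ℝ) : rot2 (π/2) p = (-p.2, p.1) := by simp [rot2]
lemma rot2_pi' (p : ℝ × ℝ) : rot2 π p = (-p.1, -p.2) := by simp [rot2]
lemma rot2_three_pi_div_two' (p : ℝ × ℝ) : rot2 (3*π/2) p = (p.2, -p.1) := by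
  have h : 3*π/2 = π + π/2 := by ring
  simp [rot2, h, Real.cos_add, Real.sin_add]

lemma exPhi0 (p : ℝ × ℝ) : exPhi 0 p = (p.1/6 - 15/8, p.2/6 + 15/8) := by
  show (1/6 : ℝ) • p + (-(15/8 : ℝ), (15/8 : ℝ)) = _
  simp [Prod.ext_iff, Prod.smul_def]; constructor <;> ring
lemma exPhi1 (p : ℝ × ℝ) : exPhi 1 p = (p.1/6 - 5/2, p.2/6 - 5/4) := by
  show (1/6 : ℝ) • p + (-(5/2 : ℝ), -(5/4 : ℝ)) = _
  simp [Prod.ext_iff, Prod.smul_def]; constructor <;> ring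
lemma exPhi2 (p : ℝ × ℝ) : exPhi 2 p = (p.2/6 - 5/4, -p.1/6 - 5/4) := by
  show (1/6 : ℝ) • rot2 (3*π/2) p + (-(5/4 : ℝ), -(5/4 : ℝ)) = _
  simp [rot2_three_pi_div_two', Prod.ext_iff, Prod.smul_def]; constructor <;> ring
lemma exPhi3 (p : ℝ × ℝ) : exPhi 3 p = (-p.2/6 - 5/2, p.1/6 - 5/2) := by
  show (1/6 : ℝ) • rot2 (π/2) p + (-(5/2 : ℝ), -(5/2 : ℝ)) = _
  simp [rot2_pi_div_two', Prod.ext_iff, Prod.smul_def]; constructor <;> ring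
lemma exPhi4 (p : ℝ × ℝ) : exPhi 4 p = (-p.1/6 - 5/4, -p.2/6 - 5/2) := by
  show (1/6 : ℝ) • rot2 π p + (-(5/4 : ℝ), -(5/2 : ℝ)) = _
  simp [rot2_pi', Prod.ext_iff, Prod.smul_def]; constructor <;> ring
lemma exPhi5 (p : ℝ × ℝ) : exPhi 5 p = (p.1/6 + 5/4, p.2/6 - 5/4) := by
  show (1/6 : ℝ) • p + ((5/4 : ℝ), -(5/4 : ℝ)) = _
  simp [Prod.ext_iff, Prod.smul_def]; constructor <;> ring
lemma exPhi6 (p : ℝ × ℝ) : exPhi 6 p = (p.2/6 + 5/2, -p.1/6 - 5/4) := by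
  show (1/6 : ℝ) • rot2 (3*π/2) p + ((5/2 : ℝ), -(5/4 : ℝ)) = _
  simp [rot2_three_pi_div_two', Prod.ext_iff, Prod.smul_def]; constructor <;> ring
lemma exPhi7 (p : ℝ × ℝ) : exPhi 7 p = (-p.2/6 + 5/4, p.1/6 - 5/2) := by
  show (1/6 : ℝ) • rot2 (π/2) p + ((5/4 : ℝ), -(5/2 : ℝ)) = _
  simp [rot2_pi_div_two', Prod.ext_iff, Prod.smul_def]; constructor <;> ring
lemma exPhi8 (p : ℝ × ℝ) : exPhi 8 p = (-p.1/6 + 5/2, -p.2/6 - 5/2) := by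
  show (1/6 : ℝ) • rot2 π p + ((5/2 : ℝ), -(5/2 : ℝ)) = _
  simp [rot2_pi', Prod.ext_iff, Prod.smul_def]; constructor <;> ring

lemma fin9_cases (i : Fin 9) :
    i = 0 ∨ i = 1 ∨ i = 2 ∨ i = 3 ∨ i = 4 ∨ i = 5 ∨ i = 6 ∨ i = 7 ∨ i = 8 := by
  revert i; decide

/-- The attractor lies in the box `[-3,3]²`. -/
lemma boxK (K : Set (ℝ × ℝ)) (hKne : K.Nonempty) (hKcpt : IsCompact K)
    (hK : K = ⋃ i, exPhi i '' K) :
    ∀ p ∈ K, |p.1| ≤ 3 ∧ |p.2| ≤ 3 := by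
  have hcont : Continuous (fun p : ℝ × ℝ => max |p.1| |p.2|) :=
    (continuous_fst.abs).max (continuous_snd.abs)
  obtain ⟨p₀, hp₀, hmax⟩ := hKcpt.exists_isMaxOn hKne hcont.continuousOn
  have hM3 : max |p₀.1| |p₀.2| ≤ 3 := by
    have hp₀' : p₀ ∈ ⋃ i, exPhi i '' K := by rw [← hK]; exact hp₀
    simp only [Set.mem_iUnion, Set.mem_image] at hp₀'
    obtain ⟨i, q, hq, heq⟩ := hp₀'
    have hqM : max |q.1| |q.2| ≤ max |p₀.1| |p₀.2| := hmax hq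
    obtain ⟨h1a, h1b⟩ := abs_le.mp (le_trans (le_max_left |q.1| |q.2|) hqM)
    obtain ⟨h2a, h2b⟩ := abs_le.mp (le_trans (le_max_right |q.1| |q.2|) hqM)
    have key : max |(exPhi i q).1| |(exPhi i q).2| ≤ (max |p₀.1| |p₀.2|)/6 + 5/2 := by
      rcases fin9_cases i with h|h|h|h|h|h|h|h|h <;> subst h <;>
        simp only [exPhi0, exPhi1, exPhi2, exPhi3, exPhi4, exPhi5, exPhi6, exPhi7, exPhi8] <;>
        rw [max_le_iff, abs_le, abs_le] <;>
        refine ⟨⟨?_, ?_⟩, ?_, ?_⟩ <;> linarith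
    have hTeq : max |(exPhi i q).1| |(exPhi i q).2| = max |p₀.1| |p₀.2| := by rw [heq]
    linarith [hTeq ▸ key]
  intro p hp
  have := hmax hp
  exact ⟨le_trans (le_trans (le_max_left _ _) this) hM3,
         le_trans (le_trans (le_max_right _ _) this) hM3⟩

/-- On the attractor, `p.2 - p.1 ≤ 9/2`. -/
lemma gK (K : Set (ℝ × ℝ)) (hKne : K.Nonempty) (hKcpt : IsCompact K)
    (hK : K = ⋃ i, exPhi i '' K) :
    ∀ p ∈ K, p.2 - p.1 ≤ 9/2 := by
  have box := boxK K hKne hKcpt hK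
  obtain ⟨p₀, hp₀, hmax⟩ :=
    hKcpt.exists_isMaxOn hKne (continuous_snd.sub continuous_fst).continuousOn
  suffices h : p₀.2 - p₀.1 ≤ 9/2 by
    intro p hp; exact le_trans (hmax hp) h
  have hp₀' : p₀ ∈ ⋃ i, exPhi i '' K := by rw [← hK]; exact hp₀
  simp only [Set.mem_iUnion, Set.mem_image] at hp₀'
  obtain ⟨i, q, hq, heq⟩ := hp₀'
  have hgq : q.2 - q.1 ≤ p₀.2 - p₀.1 := hmax hq
  obtain ⟨hq1, hq2⟩ := box q hq
  obtain ⟨h1a, h1b⟩ := abs_le.mp hq1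
  obtain ⟨h2a, h2b⟩ := abs_le.mp hq2
  rw [← heq] at hgq ⊢
  rcases fin9_cases i with h|h|h|h|h|h|h|h|h <;> subst h <;>
    simp only [exPhi0, exPhi1, exPhi2, exPhi3, exPhi4, exPhi5, exPhi6, exPhi7, exPhi8]
      at hgq ⊢ <;>
    linarith

/-- **Example 2.6 (Xiao), non-openness.** Let `K` be the attractor of the IFS
`{φ_1, …, φ_9}`, let `f(x) = x/6 + (15/8, −15/8)`, and let `x₁ ∈ K` be the fixed
point of `φ_1`. Then `f(x₁)` is not an interior point of `f(K)` relative to `K`;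
in particular `f(K)` is not relatively open in `K`. -/
theorem example_image_not_relatively_open
    (K : Set (ℝ × ℝ)) (hKne : K.Nonempty) (hKcpt : IsCompact K)
    (hK : K = ⋃ i, exPhi i '' K)
    (x₁ : ℝ × ℝ) (hx₁ : x₁ ∈ K) (hfix : exPhi 0 x₁ = x₁) :
    (¬ ∃ U : Set (ℝ × ℝ), IsOpen U ∧ exF x₁ ∈ U ∧ K ∩ U ⊆ exF '' K) ∧
    ¬ ∃ U : Set (ℝ × ℝ), IsOpen U ∧ exF '' K = K ∩ U := by
  have hgK := gK K hKne hKcpt hK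
  rw [exPhi0, Prod.ext_iff] at hfix
  obtain ⟨hf1, hf2⟩ := hfix
  simp only at hf1 hf2
  have hx1 : x₁.1 = -(9/4) := by linarith
  have hx2 : x₁.2 = 9/4 := by linarith
  have hfx : exF x₁ = ((3:ℝ)/2, -(3:ℝ)/2) := by
    simp only [exF, Prod.ext_iff, Prod.smul_def, Prod.fst_add, Prod.snd_add, smul_eq_mul]
    constructor <;> simp [hx1, hx2] <;> ring
  set pt : ℕ → ℝ × ℝ := fun n => (3/2 - (15/4)/6^n, -(3/2) + (15/4)/6^n) with hpt
  have hpt1 : ∀ n, (pt n).1 = 3/2 - (15/4)/6^n := fun n => rfl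
  have hpt2 : ∀ n, (pt n).2 = -(3/2) + (15/4)/6^n := fun n => rfl
  have hpt0 : pt 0 = x₁ := by
    have : pt 0 = (-(9/4), 9/4) := by
      simp only [hpt, pow_zero, Prod.ext_iff]; norm_num
    rw [this, Prod.ext_iff]; exact ⟨hx1.symm, hx2.symm⟩
  have hstep : ∀ n, pt (n+1) = exPhi 5 (pt n) := by
    intro n
    have h6 : (6:ℝ)^n ≠ 0 := by positivity
    rw [exPhi5]
    simp only [hpt, Prod.ext_iff]
    constructor <;> · field_simp; ring
  have hmem : ∀ n, pt n ∈ K := by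
    intro n
    induction n with
    | zero => rw [hpt0]; exact hx₁
    | succ n ih =>
      rw [hstep n, hK]
      exact Set.mem_iUnion.2 ⟨5, Set.mem_image_of_mem _ ih⟩
  have main : ¬ ∃ U : Set (ℝ × ℝ), IsOpen U ∧ exF x₁ ∈ U ∧ K ∩ U ⊆ exF '' K := by
    rintro ⟨U, hUopen, hfxU, hsub⟩
    obtain ⟨ε, hε, hball⟩ := Metric.isOpen_iff.mp hUopen _ hfxU
    obtain ⟨n, hn⟩ := exists_pow_lt_of_lt_one (show (0:ℝ) < ε * 4 / 15 by linarith)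
      (show (1:ℝ)/6 < 1 by norm_num)
    have hp6 : (0:ℝ) < 6^n := by positivity
    have hpow : (0:ℝ) < (15/4)/6^n := by positivity
    have hlt : (15/4)/6^n < ε := by
      rw [div_lt_iff₀ hp6]
      rw [one_div_pow, div_lt_iff₀ hp6] at hn
      nlinarith
    have hdist : pt n ∈ Metric.ball (exF x₁) ε := by
      rw [Metric.mem_ball, hfx, Prod.dist_eq, Real.dist_eq, Real.dist_eq, max_lt_iff]
      constructor <;>
      · rw [abs_lt]
        constructor <;> (simp only [hpt1, hpt2]; try norm_num) <;> linarith
    obtain ⟨z, hz, hfz⟩ := hsub ⟨hmem n, hball hdist⟩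
    have hfz' : ((1:ℝ)/6 * z.1 + 15/8, (1:ℝ)/6 * z.2 + -(15/8)) = pt n := by
      rw [← hfz]; rfl
    rw [Prod.ext_iff] at hfz'
    obtain ⟨hz1, hz2⟩ := hfz'
    simp only [hpt1, hpt2] at hz1 hz2
    have hgz := hgK z hz
    nlinarith [hpow]
  refine ⟨main, ?_⟩
  rintro ⟨U, hUopen, hEq⟩
  exact main ⟨U, hUopen, (hEq ▸ Set.mem_image_of_mem exF hx₁ : exF x₁ ∈ K ∩ U).2, hEq.ge⟩
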